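/- For M ∈ [1,∞) and q ∈ (0,1) with 2M ≥ max{1/q, 1/(1−q)}, the golden-unit pair of qubit states π_M = (1−1/(2M))|0⟩⟨0| + (1/(2M))|1⟩⟨1| and σ_x π_M σ_x with prior (q, 1−q) has minimum error probability (1/2)(1 − |q − 1/(2M)| − |1−q − 1/(2M)|) = 1/(2M). -/

import Mathlib

open Matrix
open scoped ComplexOrder

/-- The golden-unit qubit state `π_M = (1−1/(2M))|0⟩⟨0| + (1/(2M))|1⟩⟨1|`. -/
noncomputable def piM (M : ℝ) : Matrix (Fin 2) (Fin 2) ℂ :=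
  !![((1 - 1 / (2 * M) : ℝ) : ℂ), 0; 0, ((1 / (2 * M) : ℝ) : ℂ)]

/-- The Pauli-x matrix. -/
def sigmaX : Matrix (Fin 2) (Fin 2) ℂ := !![0, 1; 1, 0]

/-- Minimum average error probability of binary state discrimination with prior `(q, 1−q)`. -/
noncomputable def perr {d : ℕ} (q : ℝ) (ρ₀ ρ₁ : Matrix (Fin d) (Fin d) ℂ) : ℝ :=
  sInf {x : ℝ | ∃ Λ : Matrix (Fin d) (Fin d) ℂ, Λ.PosSemidef ∧ (1 - Λ).PosSemidef ∧
    x = q * ((Λ * ρ₀).trace).re + (1 - q) * (((1 - Λ) * ρ₁).trace).re}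

/-! For commuting (diagonal) states `diag a`, `diag c` the error of a test `Λ` depends only
on its diagonal entries `uᵢ ∈ [0, 1]`: it is `∑ᵢ uᵢ q aᵢ + (1 - uᵢ)(1 - q) cᵢ`, minimised
coordinatewise by a diagonal projection, with value `∑ᵢ min (q aᵢ) ((1 - q) cᵢ)`.
For `π_M` and its flip the hypothesis `2M ≥ max (1/q) (1/(1-q))` makes both minima pick the
entry `1/(2M)`, so the error is `(1 - q)/(2M) + q/(2M) = 1/(2M)`. -/

open Finset

lemma Matrix.PosSemidef.re_diag_mem_Icc {n : Type*} [Fintype n] [DecidableEq n]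
    {Λ : Matrix n n ℂ} (hΛ : Λ.PosSemidef) (hΛ' : (1 - Λ).PosSemidef) (i : n) :
    (Λ i i).re ∈ Set.Icc 0 1 := by
  have h₀ := (Complex.nonneg_iff.1 (hΛ.diag_nonneg (i := i))).1
  have h₁ := (Complex.nonneg_iff.1 (hΛ'.diag_nonneg (i := i))).1
  simp only [sub_apply, one_apply_eq, Complex.sub_re, Complex.one_re] at h₁
  exact ⟨h₀, by linarith⟩

lemma re_trace_mul_diagonal_ofReal {n : Type*} [Fintype n] [DecidableEq n]
    (Λ : Matrix n n ℂ) (a : n → ℝ) :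
    (Λ * diagonal (fun i => (a i : ℂ))).trace.re = ∑ i, (Λ i i).re * a i := by
  simp [trace, mul_diagonal, Complex.re_sum]

lemma min_le_convex_comb {X Y u : ℝ} (hu : u ∈ Set.Icc 0 1) :
    min X Y ≤ u * X + (1 - u) * Y := by
  obtain ⟨hu0, hu1⟩ := hu
  nlinarith [min_le_left X Y, min_le_right X Y]

theorem perr_diagonal {d : ℕ} (q : ℝ) (a c : Fin d → ℝ) :
    perr q (diagonal (fun i => (a i : ℂ))) (diagonal (fun i => (c i : ℂ))) =
      ∑ i, min (q * a i) ((1 - q) * c i) := by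
  have error_eq : ∀ Λ : Matrix (Fin d) (Fin d) ℂ,
      q * (Λ * diagonal (fun i => (a i : ℂ))).trace.re +
        (1 - q) * ((1 - Λ) * diagonal (fun i => (c i : ℂ))).trace.re =
      ∑ i, ((Λ i i).re * (q * a i) + (1 - (Λ i i).re) * ((1 - q) * c i)) := by
    intro Λ
    simp only [re_trace_mul_diagonal_ofReal, Matrix.sub_apply, one_apply_eq, Complex.sub_re,
      Complex.one_re, mul_sum, ← sum_add_distrib]
    exact sum_congr rfl fun i _ => by ring
  refine IsLeast.csInf_eq ⟨?_, ?_⟩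
  · let u : Fin d → ℝ := fun i => if q * a i ≤ (1 - q) * c i then 1 else 0
    have hu : ∀ i, u i ∈ Set.Icc 0 1 := fun i => by
      simp only [u]; split_ifs <;> norm_num
    refine ⟨diagonal (fun i => (u i : ℂ)), ?_, ?_, ?_⟩
    · exact PosSemidef.diagonal fun i => by simpa using (hu i).1
    · rw [← diagonal_one, diagonal_sub]
      exact PosSemidef.diagonal fun i => by simpa using (Complex.real_le_real.2 (hu i).2)
    · rw [error_eq]
      refine sum_congr rfl fun i _ => ?_
      simp only [diagonal_apply_eq, Complex.ofReal_re, u]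
      split_ifs with h
      · simp [min_eq_left h]
      · simp [min_eq_right (not_le.1 h).le]
  · rintro x ⟨Λ, hΛ, hΛ', rfl⟩
    rw [error_eq]
    exact sum_le_sum fun i _ => min_le_convex_comb (hΛ.re_diag_mem_Icc hΛ' i)

lemma sigmaX_mul_diagonal_mul_sigmaX (d : Fin 2 → ℂ) :
    sigmaX * diagonal d * sigmaX = diagonal (fun i => d i.rev) := by
  ext i j
  fin_cases i <;> fin_cases j <;> simp [sigmaX, mul_apply, Fin.sum_univ_two, vecMul_diagonal]

lemma piM_eq_diagonal (M : ℝ) :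
    piM M = diagonal (fun i => ((![1 - 1 / (2 * M), 1 / (2 * M)] i : ℝ) : ℂ)) := by
  ext i j
  fin_cases i <;> fin_cases j <;> simp [piM]

lemma perr_piM (M q : ℝ) :
    perr q (piM M) (sigmaX * piM M * sigmaX) =
      min (q * (1 - 1 / (2 * M))) ((1 - q) * (1 / (2 * M))) +
        min (q * (1 / (2 * M))) ((1 - q) * (1 - 1 / (2 * M))) := by
  rw [piM_eq_diagonal, sigmaX_mul_diagonal_mul_sigmaX, perr_diagonal, Fin.sum_univ_two]
  simp

theorem golden_unit_perr_general (M q : ℝ) (hq0 : 0 < q) (hq1 : q < 1)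
    (h2M : max (1 / q) (1 / (1 - q)) ≤ 2 * M) :
    perr q (piM M) (sigmaX * piM M * sigmaX) = 1 / (2 * M) ∧
    (1 / 2) * (1 - |q - 1 / (2 * M)| - |1 - q - 1 / (2 * M)|) = 1 / (2 * M) := by
  obtain ⟨hq, hq'⟩ := max_le_iff.1 h2M
  have hM : 0 < 2 * M := (one_div_pos.2 hq0).trans_le hq
  have hbq : 1 / (2 * M) ≤ q := (one_div_le hq0 hM).1 hq
  have hbq' : 1 / (2 * M) ≤ 1 - q := (one_div_le (sub_pos.2 hq1) hM).1 hq'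
  refine ⟨?_, ?_⟩
  · rw [perr_piM, min_eq_right (by nlinarith), min_eq_left (by nlinarith)]
    ring
  · rw [abs_of_nonneg (sub_nonneg.2 hbq), abs_of_nonneg (sub_nonneg.2 hbq')]
    ring

/-- For `M ∈ [1,∞)` and `q ∈ (0,1)` with `2M ≥ max{1/q, 1/(1−q)}`, the golden unit
`(q, π_M, σ_x π_M σ_x)` has minimum error probability
`(1/2)(1 − |q − 1/(2M)| − |1−q − 1/(2M)|) = 1/(2M)`. -/
theorem golden_unit_perr (M q : ℝ) (hM : 1 ≤ M) (hq0 : 0 < q) (hq1 : q < 1)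
    (h2M : max (1 / q) (1 / (1 - q)) ≤ 2 * M) :
    perr q (piM M) (sigmaX * piM M * sigmaX) = 1 / (2 * M) ∧
    (1 / 2) * (1 - |q - 1 / (2 * M)| - |1 - q - 1 / (2 * M)|) = 1 / (2 * M) :=
  golden_unit_perr_general M q hq0 hq1 h2M
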